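/- Let R > 1 and let f be holomorphic on {z ∈ ℂ : |z| > R} with f(z) − z bounded there, and suppose there are complex numbers (α_{mn})_{m,n≥1} such that for all z, ζ with |z| > R, |ζ| > R and z ≠ ζ, the double series ∑_{m,n≥1} α_{mn} z^{−m} ζ^{−n} converges absolutely and (f(z) − f(ζ))/(z − ζ) = exp(−∑_{m,n≥1} α_{mn} z^{−m} ζ^{−n}). If for every x = (x_n) ∈ ℓ² with ∑_{n≥1}|x_n|² = 1 the series ∑_{m,n≥1} √(mn) α_{mn} x_m x_n converges with |∑_{m,n≥1} √(mn) α_{mn} x_m x_n| ≤ 1, then f extends to a univalent function on 𝔻*: there exists F holomorphic and injective on 𝔻* = {z ∈ ℂ : |z| > 1} with F(z) = f(z) for all |z| > R. -/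

import Mathlib

/-!
Testing the Grunsky inequality on unit vectors supported on one or two indices bounds the
symmetrized coefficients `(α m n + α n m) / 2` by `1`, so their double series `T z ζ` converges
on `𝔻* × 𝔻*` and is holomorphic in each variable. On `{|z| > R}` the series of `α` is symmetric
in `(z, ζ)`, hence equals `T` there. So `F z = f ζ₀ + (z - ζ₀) exp (-T z ζ₀)` extends `f`, and the
identity theorem, applied in each variable, gives `F z - F ζ = (z - ζ) exp (-T z ζ)` on
`𝔻* × 𝔻*`, which vanishes only on the diagonal.
-/

open Complex Set

noncomputable section

def extDisk : Set ℂ := {z : ℂ | 1 < ‖z‖}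

open Filter Function

def grunskyTerm (α : ℕ+ → ℕ+ → ℂ) (z ζ : ℂ) (p : ℕ+ × ℕ+) : ℂ :=
  α p.1 p.2 * z ^ (-((p.1 : ℕ) : ℤ)) * ζ ^ (-((p.2 : ℕ) : ℤ))

def grunskySeries (α : ℕ+ → ℕ+ → ℂ) (z ζ : ℂ) : ℂ :=
  ∑' p : ℕ+ × ℕ+, grunskyTerm α z ζ p

def HasGrunskyExpansion (f : ℂ → ℂ) (α : ℕ+ → ℕ+ → ℂ) (R : ℝ) : Prop :=
  ∀ z ζ : ℂ, R < ‖z‖ → R < ‖ζ‖ → z ≠ ζ →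
    Summable (fun p => ‖grunskyTerm α z ζ p‖) ∧
    (f z - f ζ) / (z - ζ) = exp (-grunskySeries α z ζ)

def GrunskyInequality (α : ℕ+ → ℕ+ → ℂ) : Prop :=
  ∀ x : ℕ+ → ℂ, Summable (fun n : ℕ+ => ‖x n‖ ^ 2) → (∑' n : ℕ+, ‖x n‖ ^ 2) = 1 →
    ∃ s : ℂ,
      HasSum (fun p : ℕ+ × ℕ+ =>
        (Real.sqrt ((p.1 : ℝ) * (p.2 : ℝ)) : ℂ) * α p.1 p.2 * x p.1 * x p.2) s ∧
      ‖s‖ ≤ 1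

def symmetrize (α : ℕ+ → ℕ+ → ℂ) (m n : ℕ+) : ℂ := (α m n + α n m) / 2

theorem isPreconnected_setOf_lt_norm {E : Type*} [NormedAddCommGroup E] [NormedSpace ℝ E]
    (h : 1 < Module.rank ℝ E) {r : ℝ} (hr : 0 ≤ r) : IsPreconnected {x : E | r < ‖x‖} := by
  have polar :
      {x : E | r < ‖x‖} = (fun p : ℝ × E => p.1 • p.2) '' (Ioi r ×ˢ Metric.sphere 0 1) := by
    ext x
    constructor
    · intro hx
      have hx0 : ‖x‖ ≠ 0 := (hr.trans_lt hx).ne'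
      exact ⟨(‖x‖, ‖x‖⁻¹ • x), ⟨hx, by simp [norm_smul, hx0]⟩, by simp [smul_smul, hx0]⟩
    · rintro ⟨⟨t, u⟩, ⟨ht, hu⟩, rfl⟩
      simp only [mem_Ioi, mem_sphere_iff_norm, sub_zero] at ht hu
      simpa [norm_smul, hu, abs_of_pos (hr.trans_lt ht)] using ht
  rw [polar]
  exact (isPreconnected_Ioi.prod (isPreconnected_sphere h 0 1)).image _
    (continuous_fst.smul continuous_snd).continuousOn

theorem isOpen_setOf_lt_norm {E : Type*} [SeminormedAddCommGroup E] (r : ℝ) :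
    IsOpen {x : E | r < ‖x‖} :=
  isOpen_lt continuous_const continuous_norm

theorem isPreconnected_extDisk : IsPreconnected extDisk :=
  isPreconnected_setOf_lt_norm (by simp [rank_real_complex]) zero_le_one

theorem eqOn_of_cexp_eqOn {U : Set ℂ} {g h : ℂ → ℂ} (hU : IsOpen U) (hU' : IsPreconnected U)
    (hg : DifferentiableOn ℂ g U) (hh : DifferentiableOn ℂ h U)
    (hexp : EqOn (fun w => exp (g w)) (fun w => exp (h w)) U) {z₀ : ℂ} (hz₀ : z₀ ∈ U)
    (hgh : g z₀ = h z₀) : EqOn g h U := by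
  refine hU.eqOn_of_deriv_eq hU' hg hh (fun w hw => ?_) hz₀ hgh
  have hg' := (hg.differentiableAt (hU.mem_nhds hw)).hasDerivAt.cexp
  have hh' := (hh.differentiableAt (hU.mem_nhds hw)).hasDerivAt.cexp
  have hderiv := hg'.unique (hh'.congr_of_eventuallyEq (eventually_of_mem (hU.mem_nhds hw) hexp))
  rw [show exp (g w) = exp (h w) from hexp hw] at hderiv
  exact mul_left_cancel₀ (exp_ne_zero _) hderiv

theorem eqOn_extDisk_of_eqOn {g h : ℂ → ℂ} {R : ℝ} (hR : 1 ≤ R)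
    (hg : DifferentiableOn ℂ g extDisk) (hh : DifferentiableOn ℂ h extDisk)
    (hgh : EqOn g h {z : ℂ | R < ‖z‖}) : EqOn g h extDisk := by
  have hz₀ : R < ‖((R + 1 : ℝ) : ℂ)‖ := by
    rw [Complex.norm_of_nonneg (by linarith)]; linarith
  exact (hg.analyticOnNhd (isOpen_setOf_lt_norm 1)).eqOn_of_preconnected_of_eventuallyEq
    (hh.analyticOnNhd (isOpen_setOf_lt_norm 1)) isPreconnected_extDisk
    (show 1 < ‖((R + 1 : ℝ) : ℂ)‖ by linarith)
    (eventually_of_mem ((isOpen_setOf_lt_norm R).mem_nhds hz₀) hgh)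

section GrunskySeries

variable {α : ℕ+ → ℕ+ → ℂ}

theorem norm_grunskyTerm (α : ℕ+ → ℕ+ → ℂ) (z ζ : ℂ) (p : ℕ+ × ℕ+) :
    ‖grunskyTerm α z ζ p‖ = ‖α p.1 p.2‖ * ‖z‖⁻¹ ^ (p.1 : ℕ) * ‖ζ‖⁻¹ ^ (p.2 : ℕ) := by
  simp [grunskyTerm, zpow_neg, inv_pow]

theorem norm_grunskyTerm_le_of_le {z ζ z' ζ' : ℂ} (hz' : 0 < ‖z'‖) (hz : ‖z'‖ ≤ ‖z‖)
    (hζ' : 0 < ‖ζ'‖) (hζ : ‖ζ'‖ ≤ ‖ζ‖) (p : ℕ+ × ℕ+) :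
    ‖grunskyTerm α z ζ p‖ ≤ ‖grunskyTerm α z' ζ' p‖ := by
  simp only [norm_grunskyTerm]
  gcongr

theorem grunskyTerm_swap (α : ℕ+ → ℕ+ → ℂ) (z ζ : ℂ) (p : ℕ+ × ℕ+) :
    grunskyTerm (swap α) z ζ p = grunskyTerm α ζ z p.swap :=
  mul_right_comm _ _ _

theorem grunskySeries_swap (α : ℕ+ → ℕ+ → ℂ) (z ζ : ℂ) :
    grunskySeries (swap α) z ζ = grunskySeries α ζ z := by
  simp only [grunskySeries, grunskyTerm_swap]
  exact (Equiv.prodComm _ _).tsum_eq (grunskyTerm α ζ z)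

theorem summable_norm_grunskyTerm_swap_iff {z ζ : ℂ} :
    Summable (fun p => ‖grunskyTerm (swap α) z ζ p‖) ↔
      Summable (fun p => ‖grunskyTerm α ζ z p‖) := by
  simp only [grunskyTerm_swap]
  exact (Equiv.prodComm _ _).summable_iff (f := fun p => ‖grunskyTerm α ζ z p‖)

theorem grunskyTerm_symmetrize (α : ℕ+ → ℕ+ → ℂ) (z ζ : ℂ) (p : ℕ+ × ℕ+) :
    grunskyTerm (symmetrize α) z ζ p = (grunskyTerm α z ζ p + grunskyTerm (swap α) z ζ p) / 2 := by
  simp only [grunskyTerm, symmetrize, swap]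
  ring

theorem swap_symmetrize (α : ℕ+ → ℕ+ → ℂ) : swap (symmetrize α) = symmetrize α := by
  ext m n
  simp only [swap, symmetrize, add_comm]

theorem summable_norm_grunskyTerm_of_norm_le {C : ℝ} (hα : ∀ m n, ‖α m n‖ ≤ C) {z ζ : ℂ}
    (hz : 1 < ‖z‖) (hζ : 1 < ‖ζ‖) : Summable (fun p => ‖grunskyTerm α z ζ p‖) := by
  have geom : ∀ {w : ℂ}, 1 < ‖w‖ → Summable fun n : ℕ+ => ‖w‖⁻¹ ^ (n : ℕ) := fun hw =>
    (summable_geometric_of_lt_one (by positivity) (inv_lt_one_of_one_lt₀ hw)).comp_injective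
      PNat.coe_injective
  refine Summable.of_nonneg_of_le (fun _ => norm_nonneg _) (fun p => ?_)
    (((geom hz).mul_of_nonneg (geom hζ) (fun _ => by positivity)
      (fun _ => by positivity)).mul_left C)
  rw [norm_grunskyTerm, mul_assoc]
  gcongr
  exact hα _ _

theorem differentiableOn_grunskySeries_left {ζ : ℂ} {r : ℝ} (hr : 0 ≤ r)
    (hsum : ∀ s : ℝ, r < s → Summable fun p => ‖grunskyTerm α s ζ p‖) :
    DifferentiableOn ℂ (fun z => grunskySeries α z ζ) {z : ℂ | r < ‖z‖} := by
  intro z hz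
  obtain ⟨s, hrs, hsz⟩ := exists_between (show r < ‖z‖ from hz)
  have hs : 0 < s := hr.trans_lt hrs
  have hdiff : DifferentiableOn ℂ (fun w => grunskySeries α w ζ) {w : ℂ | s < ‖w‖} := by
    refine differentiableOn_tsum_of_summable_norm (hsum s hrs) (fun p w hw => ?_)
      (isOpen_setOf_lt_norm s) (fun p w hw => ?_)
    · have hw0 : w ≠ 0 := norm_pos_iff.mp (hs.trans hw)
      exact (((differentiableAt_zpow.mpr (Or.inl hw0)).const_mul _).mul_const _)
        |>.differentiableWithinAt
    · rw [norm_grunskyTerm, norm_grunskyTerm, Complex.norm_of_nonneg hs.le]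
      gcongr
      exact le_of_lt hw
  exact (hdiff.differentiableAt ((isOpen_setOf_lt_norm s).mem_nhds hsz)).differentiableWithinAt

end GrunskySeries

namespace HasGrunskyExpansion

variable {f : ℂ → ℂ} {α : ℕ+ → ℕ+ → ℂ} {R : ℝ}

theorem summable (h : HasGrunskyExpansion f α R) (hR : 0 ≤ R) {z ζ : ℂ} (hz : R < ‖z‖)
    (hζ : R < ‖ζ‖) : Summable (fun p => ‖grunskyTerm α z ζ p‖) := by
  obtain ⟨s, hRs, hs⟩ := exists_between (lt_min hz hζ)
  have hs0 : 0 < s := hR.trans_lt hRs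
  have hns : ‖(s : ℂ)‖ = s := Complex.norm_of_nonneg hs0.le
  have hsζ : (s : ℂ) ≠ ζ := by
    rintro rfl
    exact (lt_min_iff.mp hs).2.ne hns.symm
  refine (h s ζ (by rwa [hns]) hζ hsζ).1.of_nonneg_of_le (fun _ => norm_nonneg _)
    (norm_grunskyTerm_le_of_le (by rw [hns]; exact hs0) (by rw [hns]; exact (lt_min_iff.mp hs).1.le)
      (hR.trans_lt hζ) le_rfl)

theorem sub_eq (h : HasGrunskyExpansion f α R) {z ζ : ℂ} (hz : R < ‖z‖) (hζ : R < ‖ζ‖) :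
    f z - f ζ = (z - ζ) * exp (-grunskySeries α z ζ) := by
  rcases eq_or_ne z ζ with rfl | hne
  · simp
  · rw [← (h z ζ hz hζ hne).2, mul_div_cancel₀ _ (sub_ne_zero.mpr hne)]

/-- The two series differ by a holomorphic function with values in `2πiℤ` that vanishes on the
diagonal. -/
theorem grunskySeries_comm (h : HasGrunskyExpansion f α R) (hR : 0 ≤ R) {z ζ : ℂ}
    (hz : R < ‖z‖) (hζ : R < ‖ζ‖) : grunskySeries α z ζ = grunskySeries α ζ z := by
  have hleft : DifferentiableOn ℂ (fun w => -grunskySeries α w ζ) {w : ℂ | R < ‖w‖} :=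
    (differentiableOn_grunskySeries_left hR fun s hs =>
      h.summable hR (by rwa [Complex.norm_of_nonneg (hR.trans hs.le)]) hζ).neg
  have hright : DifferentiableOn ℂ (fun w => -grunskySeries (swap α) w ζ) {w : ℂ | R < ‖w‖} :=
    (differentiableOn_grunskySeries_left hR fun s hs =>
      summable_norm_grunskyTerm_swap_iff.mpr
        (h.summable hR hζ (by rwa [Complex.norm_of_nonneg (hR.trans hs.le)]))).neg
  have hexp : EqOn (fun w => exp (-grunskySeries α w ζ))
      (fun w => exp (-grunskySeries (swap α) w ζ)) {w : ℂ | R < ‖w‖} := by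
    intro w hw
    dsimp only
    rcases eq_or_ne w ζ with rfl | hne
    · rw [grunskySeries_swap α]
    · rw [grunskySeries_swap α, ← (h w ζ hw hζ hne).2, ← (h ζ w hζ hw hne.symm).2, ← neg_sub,
        ← neg_sub ζ, neg_div_neg_eq]
  have hsymm := eqOn_of_cexp_eqOn (isOpen_setOf_lt_norm R) (isPreconnected_setOf_lt_norm
    (by simp [rank_real_complex]) hR) hleft hright hexp hζ (by rw [grunskySeries_swap α]) hz
  rwa [neg_inj, grunskySeries_swap α] at hsymm

theorem symmetrize (h : HasGrunskyExpansion f α R) (hR : 0 ≤ R) :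
    HasGrunskyExpansion f (symmetrize α) R := by
  intro z ζ hz hζ hne
  have h₁ := h.summable hR hz hζ
  have h₂ := summable_norm_grunskyTerm_swap_iff.mpr (h.summable hR hζ hz)
  refine ⟨?_, ?_⟩
  · refine ((h₁.add h₂).div_const 2).of_nonneg_of_le (fun _ => norm_nonneg _) fun p => ?_
    rw [grunskyTerm_symmetrize, norm_div, Complex.norm_two]
    gcongr
    exact norm_add_le _ _
  · have hseries : grunskySeries (_root_.symmetrize α) z ζ = grunskySeries α z ζ :=
      calc grunskySeries (_root_.symmetrize α) z ζ
          = (grunskySeries α z ζ + grunskySeries (swap α) z ζ) / 2 := by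
            simp only [grunskySeries, grunskyTerm_symmetrize]
            rw [tsum_div_const, h₁.of_norm.tsum_add h₂.of_norm]
        _ = grunskySeries α z ζ := by
            rw [grunskySeries_swap α, ← h.grunskySeries_comm hR hz hζ]
            ring
    rw [hseries]
    exact (h z ζ hz hζ hne).2

end HasGrunskyExpansion

namespace GrunskyInequality

variable {α : ℕ+ → ℕ+ → ℂ}

theorem norm_sum_le_one (hG : GrunskyInequality α) {s : Finset ℕ+} {x : ℕ+ → ℂ}
    (hx : ∀ k ∉ s, x k = 0) (hx₁ : ∑ k ∈ s, ‖x k‖ ^ 2 = 1) :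
    ‖∑ p ∈ s ×ˢ s, (Real.sqrt ((p.1 : ℝ) * (p.2 : ℝ)) : ℂ) * α p.1 p.2 * x p.1 * x p.2‖ ≤ 1 := by
  have hx₀ : ∀ k ∉ s, ‖x k‖ ^ 2 = 0 := fun k hk => by simp [hx k hk]
  obtain ⟨t, ht, ht₁⟩ := hG x (summable_of_ne_finset_zero hx₀) (by rwa [tsum_eq_sum hx₀])
  refine (ht.unique (hasSum_sum_of_ne_finset_zero fun p hp => ?_)) ▸ ht₁
  rcases not_and_or.mp (Finset.mem_product.not.mp hp) with h | h <;> simp [hx _ h]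

theorem norm_mul_diag_le_one (hG : GrunskyInequality α) (m : ℕ+) : ‖(m : ℂ) * α m m‖ ≤ 1 := by
  have h := hG.norm_sum_le_one (s := {m}) (x := Pi.single m 1)
    (fun k hk => Pi.single_eq_of_ne (Finset.notMem_singleton.mp hk) _) (by simp)
  simpa [Real.sqrt_mul_self] using h

theorem norm_pair_le_one (hG : GrunskyInequality α) {m n : ℕ+} (hmn : m ≠ n) {a b : ℂ}
    (hab : ‖a‖ ^ 2 + ‖b‖ ^ 2 = 1) :
    ‖(m : ℂ) * α m m * a ^ 2 + (Real.sqrt ((m : ℝ) * n) : ℂ) * (α m n + α n m) * a * b +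
      (n : ℂ) * α n n * b ^ 2‖ ≤ 1 := by
  let x : ℕ+ → ℂ := fun k => if k = m then a else if k = n then b else 0
  have h := hG.norm_sum_le_one (s := {m, n}) (x := x) (fun k hk => by
    simp only [Finset.mem_insert, Finset.mem_singleton, not_or] at hk
    simp [x, hk.1, hk.2]) (by simp [Finset.sum_pair hmn, x, hmn.symm, hab])
  rw [Finset.sum_product, Finset.sum_pair hmn, Finset.sum_pair hmn, Finset.sum_pair hmn] at h
  convert h using 2
  simp only [x, if_pos, if_neg hmn.symm, Real.sqrt_mul_self (Nat.cast_nonneg _), mul_comm (n : ℝ)]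
  push_cast
  ring

theorem norm_sqrt_mul_add_le_two (hG : GrunskyInequality α) {m n : ℕ+} (hmn : m ≠ n) :
    ‖(Real.sqrt ((m : ℝ) * n) : ℂ) * (α m n + α n m)‖ ≤ 2 := by
  set c : ℂ := (((Real.sqrt 2)⁻¹ : ℝ) : ℂ)
  have hc : c ^ 2 = 1 / 2 := by
    simp only [c, ← ofReal_pow, inv_pow, Real.sq_sqrt zero_le_two]
    push_cast; ring
  have hcn : ‖c‖ ^ 2 + ‖c‖ ^ 2 = 1 := by
    rw [← norm_pow, hc]; norm_num
  have hcn' : ‖c‖ ^ 2 + ‖-c‖ ^ 2 = 1 := by rwa [norm_neg]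
  -- the unit vectors `c (e_m ± e_n)` differ only in the sign of the mixed term
  calc ‖(Real.sqrt ((m : ℝ) * n) : ℂ) * (α m n + α n m)‖
      = ‖((m : ℂ) * α m m * c ^ 2 + (Real.sqrt ((m : ℝ) * n) : ℂ) * (α m n + α n m) * c * c +
          (n : ℂ) * α n n * c ^ 2) -
        ((m : ℂ) * α m m * c ^ 2 + (Real.sqrt ((m : ℝ) * n) : ℂ) * (α m n + α n m) * c * -c +
          (n : ℂ) * α n n * (-c) ^ 2)‖ := by
        congr 1
        linear_combination (-2 * (Real.sqrt ((m : ℝ) * n) : ℂ) * (α m n + α n m)) * hc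
    _ ≤ 1 + 1 := (norm_sub_le _ _).trans
        (add_le_add (hG.norm_pair_le_one hmn hcn) (hG.norm_pair_le_one hmn hcn'))
    _ = 2 := by norm_num

theorem norm_symmetrize_le_one (hG : GrunskyInequality α) (m n : ℕ+) :
    ‖symmetrize α m n‖ ≤ 1 := by
  rcases eq_or_ne m n with rfl | hmn
  · have hm : (1 : ℝ) ≤ ‖(m : ℂ)‖ := by
      rw [Complex.norm_natCast]; exact Nat.one_le_cast.mpr m.pos
    calc ‖symmetrize α m m‖ = ‖α m m‖ := by rw [symmetrize, add_self_div_two]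
      _ ≤ ‖(m : ℂ)‖ * ‖α m m‖ := le_mul_of_one_le_left (norm_nonneg _) hm
      _ ≤ 1 := (norm_mul _ _).symm.trans_le (hG.norm_mul_diag_le_one m)
  · have hmn₁ : (1 : ℝ) ≤ Real.sqrt ((m : ℝ) * n) :=
      Real.one_le_sqrt.mpr (one_le_mul_of_one_le_of_one_le
        (Nat.one_le_cast.mpr m.pos) (Nat.one_le_cast.mpr n.pos))
    have h := hG.norm_sqrt_mul_add_le_two hmn
    rw [norm_mul, Complex.norm_of_nonneg (Real.sqrt_nonneg _)] at h
    rw [symmetrize, norm_div, Complex.norm_two, div_le_one two_pos]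
    exact (le_mul_of_one_le_left (norm_nonneg _) hmn₁).trans h

end GrunskyInequality

def grunskyExtension (f : ℂ → ℂ) (β : ℕ+ → ℕ+ → ℂ) (ζ₀ z : ℂ) : ℂ :=
  f ζ₀ + (z - ζ₀) * exp (-grunskySeries β z ζ₀)

section Extension

variable {f : ℂ → ℂ} {β : ℕ+ → ℕ+ → ℂ} {R C : ℝ} {ζ₀ : ℂ}

theorem differentiableOn_grunskySeries_of_norm_le (hβ : ∀ m n, ‖β m n‖ ≤ C) {ζ : ℂ}
    (hζ : ζ ∈ extDisk) : DifferentiableOn ℂ (fun z => grunskySeries β z ζ) extDisk :=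
  differentiableOn_grunskySeries_left zero_le_one fun s hs =>
    summable_norm_grunskyTerm_of_norm_le hβ
      (by rwa [Complex.norm_of_nonneg (zero_le_one.trans hs.le)]) hζ

theorem differentiableOn_grunskyExtension (hβ : ∀ m n, ‖β m n‖ ≤ C) (hζ₀ : ζ₀ ∈ extDisk) :
    DifferentiableOn ℂ (grunskyExtension f β ζ₀) extDisk :=
  ((differentiableOn_id.sub_const ζ₀).mul
    (differentiableOn_grunskySeries_of_norm_le hβ hζ₀).neg.cexp).const_add (f ζ₀)

namespace HasGrunskyExpansion

theorem grunskyExtension_eq (h : HasGrunskyExpansion f β R) (hζ₀ : R < ‖ζ₀‖) {z : ℂ}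
    (hz : R < ‖z‖) : grunskyExtension f β ζ₀ z = f z := by
  rw [grunskyExtension, ← h.sub_eq hz hζ₀]
  ring

theorem grunskyExtension_sub (h : HasGrunskyExpansion f β R) (hR : 1 ≤ R) (hβs : swap β = β)
    (hβ : ∀ m n, ‖β m n‖ ≤ C) (hζ₀ : R < ‖ζ₀‖) {z ζ : ℂ} (hz : z ∈ extDisk)
    (hζ : ζ ∈ extDisk) :
    grunskyExtension f β ζ₀ z - grunskyExtension f β ζ₀ ζ =
      (z - ζ) * exp (-grunskySeries β z ζ) := by
  set F := grunskyExtension f β ζ₀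
  have hF : DifferentiableOn ℂ F extDisk :=
    differentiableOn_grunskyExtension hβ (hR.trans_lt hζ₀ : 1 < ‖ζ₀‖)
  have hcomm : ∀ z ζ, grunskySeries β z ζ = grunskySeries β ζ z := fun z ζ => by
    rw [← grunskySeries_swap β, hβs]
  have hleft : ∀ ζ, R < ‖ζ‖ → EqOn (fun z => F z - F ζ)
      (fun z => (z - ζ) * exp (-grunskySeries β z ζ)) extDisk := fun ζ hζR =>
    eqOn_extDisk_of_eqOn hR (hF.sub_const _) ((differentiableOn_id.sub_const ζ).mul
      (differentiableOn_grunskySeries_of_norm_le hβ (hR.trans_lt hζR : 1 < ‖ζ‖)).neg.cexp)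
      fun z hzR => by
        simp only [F, h.grunskyExtension_eq hζ₀ hzR, h.grunskyExtension_eq hζ₀ hζR]
        exact h.sub_eq hzR hζR
  have hright : EqOn (fun ζ => F z - F ζ) (fun ζ => (z - ζ) * exp (-grunskySeries β ζ z))
      extDisk :=
    eqOn_extDisk_of_eqOn hR (hF.neg.const_add _) (((differentiableOn_const z).sub
      differentiableOn_id).mul (differentiableOn_grunskySeries_of_norm_le hβ hz).neg.cexp)
      fun ζ hζR => by
        simp only [← hcomm z ζ]
        exact hleft ζ hζR hz
  simpa only [← hcomm z ζ] using hright hζ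

theorem injOn_grunskyExtension (h : HasGrunskyExpansion f β R) (hR : 1 ≤ R) (hβs : swap β = β)
    (hβ : ∀ m n, ‖β m n‖ ≤ C) (hζ₀ : R < ‖ζ₀‖) : InjOn (grunskyExtension f β ζ₀) extDisk := by
  intro z hz ζ hζ hzζ
  have hsub := h.grunskyExtension_sub hR hβs hβ hζ₀ hz hζ
  rw [hzζ, sub_self, eq_comm, mul_eq_zero] at hsub
  exact sub_eq_zero.mp (hsub.resolve_right (exp_ne_zero _))

end HasGrunskyExpansion

end Extension

theorem grunsky_univalence_criterion_general (R : ℝ) (hR : 1 < R) (f : ℂ → ℂ) (α : ℕ+ → ℕ+ → ℂ)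
    (hα : ∀ z ζ : ℂ, R < ‖z‖ → R < ‖ζ‖ → z ≠ ζ →
      Summable (fun p : ℕ+ × ℕ+ =>
        ‖α p.1 p.2 * z ^ (-((p.1 : ℕ) : ℤ)) * ζ ^ (-((p.2 : ℕ) : ℤ))‖) ∧
      (f z - f ζ) / (z - ζ) =
        Complex.exp (- ∑' p : ℕ+ × ℕ+,
          α p.1 p.2 * z ^ (-((p.1 : ℕ) : ℤ)) * ζ ^ (-((p.2 : ℕ) : ℤ))))
    (hG : ∀ x : ℕ+ → ℂ, Summable (fun n : ℕ+ => ‖x n‖ ^ 2) →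
      (∑' n : ℕ+, ‖x n‖ ^ 2) = 1 →
      ∃ s : ℂ,
        HasSum (fun p : ℕ+ × ℕ+ =>
          (Real.sqrt ((p.1 : ℝ) * (p.2 : ℝ)) : ℂ) * α p.1 p.2 * x p.1 * x p.2) s ∧
        ‖s‖ ≤ 1) :
    ∃ F : ℂ → ℂ, DifferentiableOn ℂ F extDisk ∧ Set.InjOn F extDisk ∧
      ∀ z : ℂ, R < ‖z‖ → F z = f z := by
  have hexp : HasGrunskyExpansion f (symmetrize α) R :=
    HasGrunskyExpansion.symmetrize hα (zero_le_one.trans hR.le)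
  have hβ : ∀ m n, ‖symmetrize α m n‖ ≤ 1 := GrunskyInequality.norm_symmetrize_le_one hG
  have hζ₀ : R < ‖((R + 1 : ℝ) : ℂ)‖ := by
    rw [Complex.norm_of_nonneg (by linarith)]
    linarith
  exact ⟨grunskyExtension f (symmetrize α) (R + 1 : ℝ),
    differentiableOn_grunskyExtension hβ (hR.trans hζ₀),
    hexp.injOn_grunskyExtension hR.le (swap_symmetrize α) hβ hζ₀,
    fun z hz => hexp.grunskyExtension_eq hζ₀ hz⟩

/-- **Grunsky's univalence criterion.** Let `R > 1` and let `f` be holomorphic on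
`{|z| > R}` with `f z - z` bounded there, with coefficients `α` such that for all distinct
`z, ζ` with `|z| > R`, `|ζ| > R` the series `∑ α m n z^{-m} ζ^{-n}` converges absolutely and
`(f z - f ζ)/(z - ζ) = exp(-∑ α m n z^{-m} ζ^{-n})`.  If for every unit vector `x ∈ ℓ²`
the series `∑ √(mn) α m n x m x n` converges with sum of modulus at most `1`,
then `f` extends to a holomorphic injective function on all of `𝔻*`. -/
theorem grunsky_univalence_criterion (R : ℝ) (hR : 1 < R) (f : ℂ → ℂ) (α : ℕ+ → ℕ+ → ℂ)
    (hf : DifferentiableOn ℂ f {z : ℂ | R < ‖z‖})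
    (hb : ∃ C : ℝ, ∀ z : ℂ, R < ‖z‖ → ‖f z - z‖ ≤ C)
    (hα : ∀ z ζ : ℂ, R < ‖z‖ → R < ‖ζ‖ → z ≠ ζ →
      Summable (fun p : ℕ+ × ℕ+ =>
        ‖α p.1 p.2 * z ^ (-((p.1 : ℕ) : ℤ)) * ζ ^ (-((p.2 : ℕ) : ℤ))‖) ∧
      (f z - f ζ) / (z - ζ) =
        Complex.exp (- ∑' p : ℕ+ × ℕ+,
          α p.1 p.2 * z ^ (-((p.1 : ℕ) : ℤ)) * ζ ^ (-((p.2 : ℕ) : ℤ))))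
    (hG : ∀ x : ℕ+ → ℂ, Summable (fun n : ℕ+ => ‖x n‖ ^ 2) →
      (∑' n : ℕ+, ‖x n‖ ^ 2) = 1 →
      ∃ s : ℂ,
        HasSum (fun p : ℕ+ × ℕ+ =>
          (Real.sqrt ((p.1 : ℝ) * (p.2 : ℝ)) : ℂ) * α p.1 p.2 * x p.1 * x p.2) s ∧
        ‖s‖ ≤ 1) :
    ∃ F : ℂ → ℂ, DifferentiableOn ℂ F extDisk ∧ Set.InjOn F extDisk ∧
      ∀ z : ℂ, R < ‖z‖ → F z = f z :=
  grunsky_univalence_criterion_general R hR f α hα hG
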